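/- Assume (G), (L) and (M), and let r0 > 0 satisfy M(r0,L) > R0. Then there exists a constant C > 0 such that for every integer j ≥ 1 and every r ∈ [r0, 2r0], j·(log(d/K))/(m-1) − C ≤ log log M(2^j r, L) ≤ j·(log(dK))/(m-1) + C. -/
import Mathlib

/-- The maximum modulus `M(r,g) = max_{‖x‖ = r} ‖g(x)‖` (as a supremum). -/
noncomputable def maxMod {m : ℕ} (g : EuclideanSpace ℝ (Fin m) → EuclideanSpace ℝ (Fin m))
    (r : ℝ) : ℝ :=
  sSup ((fun x => ‖g x‖) '' {x : EuclideanSpace ℝ (Fin m) | ‖x‖ = r})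

open Real

set_option maxHeartbeats 1000000

lemma maxMod_spec {m : ℕ} (hm : 2 ≤ m)
    {L : EuclideanSpace ℝ (Fin m) → EuclideanSpace ℝ (Fin m)}
    (hL : Continuous L) {r : ℝ} (hr : 0 ≤ r) :
    (∃ x, ‖x‖ = r ∧ maxMod L r = ‖L x‖) ∧
      ∀ y : EuclideanSpace ℝ (Fin m), ‖y‖ = r → ‖L y‖ ≤ maxMod L r := by
  have hSeq : {x : EuclideanSpace ℝ (Fin m) | ‖x‖ = r} = Metric.sphere 0 r := by
    ext x; simp [dist_zero_right]
  have hS : IsCompact {x : EuclideanSpace ℝ (Fin m) | ‖x‖ = r} := by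
    rw [hSeq]; exact isCompact_sphere 0 r
  have hne : {x : EuclideanSpace ℝ (Fin m) | ‖x‖ = r}.Nonempty := by
    refine ⟨EuclideanSpace.single (⟨0, by omega⟩ : Fin m) r, ?_⟩
    simp only [Set.mem_setOf_eq, EuclideanSpace.norm_single]
    exact abs_of_nonneg hr
  have hKc : IsCompact ((fun x => ‖L x‖) '' {x : EuclideanSpace ℝ (Fin m) | ‖x‖ = r}) :=
    hS.image hL.norm
  have hKne := hne.image (fun x => ‖L x‖)
  obtain ⟨x, hx, hxe⟩ := hKc.sSup_mem hKne
  exact ⟨⟨x, hx, hxe.symm⟩, fun y hy => (hKc.isLUB_sSup hKne).1 ⟨y, hy, rfl⟩⟩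

/-- The key uniform estimate of Theorem 1.4: there is `C > 0` with
`j·log(d/K)/(m−1) − C ≤ log log M(2^j r, L) ≤ j·log(dK)/(m−1) + C`
for all `j ≥ 1` and `r ∈ [r0, 2r0]`. -/
theorem loglog_maxMod_uniform {m : ℕ} (hm : 2 ≤ m) (d K : ℝ) (hK : 1 ≤ K) (hdK : K < d)
    (a b : ℝ) (ha : a = (d / K) ^ ((1 : ℝ) / ((m : ℝ) - 1)))
    (hb : b = (d * K) ^ ((1 : ℝ) / ((m : ℝ) - 1)))
    (R0 C1 C2 : ℝ) (hR0 : 1 ≤ R0) (hC1 : 0 < C1) (hC2 : 1 ≤ C2)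
    (hbig : 1 < C1 * R0 ^ (a - 1))
    (f L : EuclideanSpace ℝ (Fin m) → EuclideanSpace ℝ (Fin m))
    (hlow : ∀ y : EuclideanSpace ℝ (Fin m), R0 < ‖y‖ → C1 * ‖y‖ ^ a ≤ ‖f y‖)
    (hup : ∀ y : EuclideanSpace ℝ (Fin m), ‖f y‖ ≤ C2 * (max ‖y‖ R0) ^ b)
    (hLcont : Continuous L)
    (hfunc : ∀ x : EuclideanSpace ℝ (Fin m), f (L x) = L ((2 : ℝ) • x))
    (hmono : ∀ r s : ℝ, 0 < r → r ≤ s → maxMod L r ≤ maxMod L s)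
    (r0 : ℝ) (hr0 : 0 < r0) (hMr0 : R0 < maxMod L r0) :
    ∃ C : ℝ, 0 < C ∧ ∀ j : ℕ, 1 ≤ j → ∀ r : ℝ, r ∈ Set.Icc r0 (2 * r0) →
      (j : ℝ) * Real.log (d / K) / ((m : ℝ) - 1) - C ≤
        Real.log (Real.log (maxMod L ((2 : ℝ) ^ j * r))) ∧
      Real.log (Real.log (maxMod L ((2 : ℝ) ^ j * r))) ≤
        (j : ℝ) * Real.log (d * K) / ((m : ℝ) - 1) + C := by
  -- basic positivity facts
  have hK0 : (0:ℝ) < K := lt_of_lt_of_le one_pos hK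
  have hd0 : (0:ℝ) < d := lt_trans hK0 hdK
  have hm1 : (0:ℝ) < (m:ℝ) - 1 := by
    have : (2:ℝ) ≤ (m:ℝ) := by exact_mod_cast hm
    linarith
  have hdK1 : (1:ℝ) < d / K := (one_lt_div hK0).mpr hdK
  have hdK1' : (1:ℝ) < d * K := by nlinarith
  have ha1 : 1 < a := by
    rw [ha]
    exact (one_lt_rpow_iff_of_pos (by positivity)).mpr (Or.inl ⟨hdK1, by positivity⟩)
  have hb1 : 1 < b := by
    rw [hb]
    exact (one_lt_rpow_iff_of_pos (by positivity)).mpr (Or.inl ⟨hdK1', by positivity⟩)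
  have ha0 : (0:ℝ) < a := lt_trans one_pos ha1
  have hb0 : (0:ℝ) < b := lt_trans one_pos hb1
  have hloga : Real.log a = Real.log (d / K) / ((m:ℝ) - 1) := by
    rw [ha, Real.log_rpow (by positivity)]; ring
  have hlogb : Real.log b = Real.log (d * K) / ((m:ℝ) - 1) := by
    rw [hb, Real.log_rpow (by positivity)]; ring
  have hR0' : (0:ℝ) < R0 := lt_of_lt_of_le one_pos hR0
  have hM0 : (0:ℝ) < maxMod L r0 := lt_trans hR0' hMr0
  -- maxMod facts
  have hub : ∀ s : ℝ, 0 ≤ s → ∀ y : EuclideanSpace ℝ (Fin m), ‖y‖ = s → ‖L y‖ ≤ maxMod L s :=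
    fun s hs => (maxMod_spec hm hLcont hs).2
  have hatt : ∀ s : ℝ, 0 ≤ s → ∃ x, ‖x‖ = s ∧ maxMod L s = ‖L x‖ :=
    fun s hs => (maxMod_spec hm hLcont hs).1
  -- doubling estimates
  have hdlow : ∀ s : ℝ, 0 < s → R0 < maxMod L s →
      C1 * (maxMod L s) ^ a ≤ maxMod L (2 * s) := by
    intro s hs hRs
    obtain ⟨x, hx, he⟩ := hatt s hs.le
    have h2x : ‖(2:ℝ) • x‖ = 2 * s := by rw [norm_smul, hx]; norm_num
    calc C1 * (maxMod L s) ^ a = C1 * ‖L x‖ ^ a := by rw [he]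
      _ ≤ ‖f (L x)‖ := hlow _ (by rw [← he]; exact hRs)
      _ = ‖L ((2:ℝ) • x)‖ := by rw [hfunc]
      _ ≤ maxMod L (2 * s) := hub _ (by positivity) _ h2x
  have hdup : ∀ s : ℝ, 0 < s → R0 ≤ maxMod L s →
      maxMod L (2 * s) ≤ C2 * (maxMod L s) ^ b := by
    intro s hs hRs
    obtain ⟨x, hx, he⟩ := hatt (2 * s) (by positivity)
    have hxx : ‖(2:ℝ)⁻¹ • x‖ = s := by
      have h12 : ‖(2:ℝ)⁻¹‖ = 1 / 2 := by norm_num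
      rw [norm_smul, hx, h12]; ring
    have hx2 : ((2:ℝ)) • ((2:ℝ)⁻¹ • x) = x := by rw [smul_smul]; norm_num
    have hfx : f (L ((2:ℝ)⁻¹ • x)) = L x := by rw [hfunc, hx2]
    have hmaxle : max ‖L ((2:ℝ)⁻¹ • x)‖ R0 ≤ maxMod L s :=
      max_le (hub _ hs.le _ hxx) hRs
    calc maxMod L (2 * s) = ‖L x‖ := he
      _ = ‖f (L ((2:ℝ)⁻¹ • x))‖ := by rw [hfx]
      _ ≤ C2 * (max ‖L ((2:ℝ)⁻¹ • x)‖ R0) ^ b := hup _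
      _ ≤ C2 * (maxMod L s) ^ b := by
          refine mul_le_mul_of_nonneg_left ?_ (by linarith)
          exact Real.rpow_le_rpow (le_trans hR0'.le (le_max_right _ _)) hmaxle hb0.le
  -- constants for the lower bound
  set β : ℝ := Real.log (maxMod L r0) with hβdef
  have hβR : Real.log R0 < β := Real.log_lt_log hR0' hMr0
  have hlogR0 : (0:ℝ) ≤ Real.log R0 := Real.log_nonneg hR0
  have hβ : 0 < β := lt_of_le_of_lt hlogR0 hβR
  set Lc : ℝ := min (Real.log C1) 0 with hLcdef
  have hLc0 : Lc ≤ 0 := min_le_right _ _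
  have hLc1 : Lc ≤ Real.log C1 := min_le_left _ _
  set κ : ℝ := -Lc / (a - 1) with hκdef
  have hκ0 : 0 ≤ κ := div_nonneg (by linarith) (by linarith)
  have hane : a - 1 ≠ 0 := ne_of_gt (by linarith)
  have hκeq : κ * (a - 1) = -Lc := by
    rw [hκdef, div_mul_cancel₀ _ hane]
  set δ : ℝ := β - κ with hδdef
  have hbiglog : 0 < Real.log C1 + (a - 1) * Real.log R0 := by
    have h1 : Real.log 1 < Real.log (C1 * R0 ^ (a - 1)) :=
      Real.log_lt_log one_pos hbig
    rw [Real.log_one, Real.log_mul (ne_of_gt hC1) (by positivity),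
      Real.log_rpow hR0'] at h1
    linarith
  have hκle : κ ≤ Real.log R0 := by
    rcases min_cases (Real.log C1) 0 with ⟨h1, h2⟩ | ⟨h1, h2⟩
    · rw [hκdef, hLcdef, h1, div_le_iff₀ (by linarith : (0:ℝ) < a - 1)]
      have hcomm : Real.log R0 * (a - 1) = (a - 1) * Real.log R0 := mul_comm _ _
      linarith
    · rw [hκdef, hLcdef, h1]
      simpa using hlogR0
  have hδ : 0 < δ := by rw [hδdef]; linarith
  -- constants for the upper bound
  set B : ℝ := Real.log (maxMod L (2 * r0)) with hBdef
  have hβB : β ≤ B := Real.log_le_log hM0 (hmono r0 (2 * r0) hr0 (by linarith))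
  have hB : 0 < B := lt_of_lt_of_le hβ hβB
  have hlogC2 : (0:ℝ) ≤ Real.log C2 := Real.log_nonneg hC2
  set κ2 : ℝ := -Real.log C2 / (b - 1) with hκ2def
  have hκ2 : κ2 ≤ 0 := div_nonpos_of_nonpos_of_nonneg (by linarith) (by linarith)
  have hbne : b - 1 ≠ 0 := ne_of_gt (by linarith)
  have hκ2eq : κ2 * (b - 1) = -Real.log C2 := by
    rw [hκ2def, div_mul_cancel₀ _ hbne]
  set δ2 : ℝ := B - κ2 with hδ2def
  have hδ2 : 0 < δ2 := by rw [hδ2def]; linarith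
  -- the constant C
  set Cst : ℝ := max (max (-Real.log δ) (Real.log δ2)) 0 + 1 with hCstdef
  have hCpos : 0 < Cst := by
    have h0 : (0:ℝ) ≤ max (max (-Real.log δ) (Real.log δ2)) 0 := le_max_right _ _
    rw [hCstdef]; linarith
  refine ⟨Cst, hCpos, ?_⟩
  intro j _ r hr
  obtain ⟨hr1, hr2⟩ := hr
  have hrpos : 0 < r := lt_of_lt_of_le hr0 hr1
  have hμpos : ∀ i : ℕ, (0:ℝ) < (2:ℝ) ^ i * r := fun i => by positivity
  have hμlb : ∀ i : ℕ, maxMod L r0 ≤ maxMod L ((2:ℝ) ^ i * r) := by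
    intro i
    refine hmono r0 _ hr0 ?_
    have h1 : (1:ℝ) ≤ (2:ℝ) ^ i := one_le_pow₀ (by norm_num)
    exact le_trans hr1 (le_mul_of_one_le_left hrpos.le h1)
  have hμR0 : ∀ i : ℕ, R0 < maxMod L ((2:ℝ) ^ i * r) :=
    fun i => lt_of_lt_of_le hMr0 (hμlb i)
  have hμp : ∀ i : ℕ, 0 < maxMod L ((2:ℝ) ^ i * r) :=
    fun i => lt_trans hR0' (hμR0 i)
  have hx0 : ∀ i : ℕ, 0 < Real.log (maxMod L ((2:ℝ) ^ i * r)) :=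
    fun i => Real.log_pos (lt_of_le_of_lt hR0 (hμR0 i))
  -- lower induction
  have hindlo : ∀ i : ℕ, δ * a ^ i + κ ≤ Real.log (maxMod L ((2:ℝ) ^ i * r)) := by
    intro i
    induction i with
    | zero =>
        have h0 : (2:ℝ) ^ (0:ℕ) * r = r := by norm_num
        rw [h0, pow_zero]
        have : β ≤ Real.log (maxMod L r) := Real.log_le_log hM0 (hmono r0 r hr0 hr1)
        rw [hδdef]; linarith
    | succ i ih =>
        have hkey := hdlow ((2:ℝ) ^ i * r) (hμpos i) (hμR0 i)
        have heq : 2 * ((2:ℝ) ^ i * r) = (2:ℝ) ^ (i + 1) * r := by ring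
        rw [heq] at hkey
        have hlogkey : Real.log C1 + a * Real.log (maxMod L ((2:ℝ) ^ i * r)) ≤
            Real.log (maxMod L ((2:ℝ) ^ (i + 1) * r)) := by
          have h1 : Real.log (C1 * (maxMod L ((2:ℝ) ^ i * r)) ^ a) =
              Real.log C1 + a * Real.log (maxMod L ((2:ℝ) ^ i * r)) := by
            rw [Real.log_mul (ne_of_gt hC1) (Real.rpow_pos_of_pos (hμp i) a).ne',
              Real.log_rpow (hμp i)]
          rw [← h1]
          exact Real.log_le_log (mul_pos hC1 (Real.rpow_pos_of_pos (hμp i) a)) hkey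
        have h2 : a * (δ * a ^ i + κ) ≤ a * Real.log (maxMod L ((2:ℝ) ^ i * r)) :=
          mul_le_mul_of_nonneg_left ih ha0.le
        have h3 : δ * a ^ (i + 1) + κ = a * (δ * a ^ i + κ) + (-(κ * (a - 1))) := by ring
        rw [h3, hκeq]
        have : -(-Lc) ≤ Real.log C1 := by simpa using hLc1
        linarith
  -- upper induction
  have hindup : ∀ i : ℕ, Real.log (maxMod L ((2:ℝ) ^ i * r)) ≤ δ2 * b ^ i + κ2 := by
    intro i
    induction i with
    | zero =>
        have h0 : (2:ℝ) ^ (0:ℕ) * r = r := by norm_num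
        rw [h0, pow_zero]
        have : Real.log (maxMod L r) ≤ B :=
          Real.log_le_log (lt_of_lt_of_le hM0 (hmono r0 r hr0 hr1))
            (hmono r (2 * r0) hrpos hr2)
        rw [hδ2def]; linarith
    | succ i ih =>
        have hkey := hdup ((2:ℝ) ^ i * r) (hμpos i) (hμR0 i).le
        have heq : 2 * ((2:ℝ) ^ i * r) = (2:ℝ) ^ (i + 1) * r := by ring
        rw [heq] at hkey
        have hlogkey : Real.log (maxMod L ((2:ℝ) ^ (i + 1) * r)) ≤
            Real.log C2 + b * Real.log (maxMod L ((2:ℝ) ^ i * r)) := by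
          have h1 : Real.log (C2 * (maxMod L ((2:ℝ) ^ i * r)) ^ b) =
              Real.log C2 + b * Real.log (maxMod L ((2:ℝ) ^ i * r)) := by
            rw [Real.log_mul (by linarith : C2 ≠ 0) (Real.rpow_pos_of_pos (hμp i) b).ne',
              Real.log_rpow (hμp i)]
          rw [← h1]
          exact Real.log_le_log (hμp (i + 1)) hkey
        have h2 : b * Real.log (maxMod L ((2:ℝ) ^ i * r)) ≤ b * (δ2 * b ^ i + κ2) :=
          mul_le_mul_of_nonneg_left ih hb0.le
        have h3 : δ2 * b ^ (i + 1) + κ2 = b * (δ2 * b ^ i + κ2) + (-(κ2 * (b - 1))) := by ring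
        rw [h3, hκ2eq]
        linarith
  constructor
  · -- lower bound
    have h1 : δ * a ^ j ≤ Real.log (maxMod L ((2:ℝ) ^ j * r)) := by
      have := hindlo j; linarith
    have h2 : Real.log (δ * a ^ j) ≤
        Real.log (Real.log (maxMod L ((2:ℝ) ^ j * r))) :=
      Real.log_le_log (mul_pos hδ (pow_pos ha0 j)) h1
    rw [Real.log_mul (ne_of_gt hδ) (pow_pos ha0 j).ne', Real.log_pow] at h2
    have h3 : (j:ℝ) * Real.log a = (j:ℝ) * Real.log (d / K) / ((m:ℝ) - 1) := by
      rw [hloga]; ring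
    rw [h3] at h2
    have h4 : -Real.log δ ≤ max (max (-Real.log δ) (Real.log δ2)) 0 :=
      le_trans (le_max_left _ _) (le_max_left _ _)
    linarith
  · -- upper bound
    have h1 : Real.log (maxMod L ((2:ℝ) ^ j * r)) ≤ δ2 * b ^ j := by
      have := hindup j; linarith
    have h2 : Real.log (Real.log (maxMod L ((2:ℝ) ^ j * r))) ≤
        Real.log (δ2 * b ^ j) :=
      Real.log_le_log (hx0 j) h1
    rw [Real.log_mul (ne_of_gt hδ2) (pow_pos hb0 j).ne', Real.log_pow] at h2
    have h3 : (j:ℝ) * Real.log b = (j:ℝ) * Real.log (d * K) / ((m:ℝ) - 1) := by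
      rw [hlogb]; ring
    rw [h3] at h2
    have h4 : Real.log δ2 ≤ max (max (-Real.log δ) (Real.log δ2)) 0 :=
      le_trans (le_max_right _ _) (le_max_left _ _)
    linarith
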